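/- Let n ≥ 1, m > 0 and 0 < θ ≤ 1 with n − 2θ > 0. Then there exist a positive constant C depending on n, m, θ and a time t₀ > 0 such that for all t ≥ t₀ and all P₁ ∈ ℝ, ∫_{ℝⁿ} |φ(t,ξ)|² dξ ≥ C P₁² t^{-(n−2θ)/2}. -/

import Mathlib

open MeasureTheory Real

noncomputable section

/-- Euclidean space `ℝⁿ`. -/
abbrev E (n : ℕ) := EuclideanSpace ℝ (Fin n)

/-- The asymptotic profile `φ(t,ξ)`, as a function of `r = |ξ|`. -/
def phi (m θ P₁ t r : ℝ) : ℝ :=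
  P₁ * Real.exp (-(r ^ 2) * t / 2) *
    Real.sin (t * Real.sqrt (r ^ 2 + m ^ 2 * Real.log (1 + r ^ (2 * θ)))) /
    Real.sqrt (r ^ 2 + m ^ 2 * Real.log (1 + r ^ (2 * θ)))

/-!
In polar coordinates `∫ φ(t,ξ)² dξ = n |B₁| ∫₀^∞ r^(n-1) φ(t,r)² dr`. Put `a = t^(-1/2)` and keep
only the shell `a ≤ r ≤ 2a`. There `e^(-r²t) ≥ e^(-4)` and the symbol `r² + m² log(1 + r^(2θ))`
is comparable to `a^(2θ)`, so the integrand is at least a multiple of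
`P₁² a^(n-1-2θ) sin²(t ω(r))`, where `ω = freq` is the square root of the symbol. The phase
`t ω(r)` has derivative between two fixed multiples of `t a^(θ-1)`, and it gains
`≳ t a^θ = a^(θ-2) → ∞` across the shell; substituting `u = t ω(r)` therefore shows that `sin²`
keeps a fixed fraction of its mean there, `∫ₐ^(2a) sin²(t ω(r)) dr ≥ κ a`. Altogether
`∫ φ² ≥ C P₁² a^(n-2θ)`.
-/

open Set

namespace Profile

lemma sub_sub_one_le_two_mul_integral_sin_sq (α β : ℝ) :
    β - α - 1 ≤ 2 * ∫ x in α..β, sin x ^ 2 := by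
  rw [integral_sin_sq]
  nlinarith [sq_nonneg (sin α + cos α), sq_nonneg (sin β - cos β),
    sin_sq_add_cos_sq α, sin_sq_add_cos_sq β]

lemma mul_sub_sub_one_le_integral_sin_sq_comp {f f' : ℝ → ℝ} {a b L U : ℝ} (hab : a ≤ b)
    (hf : ContinuousOn f (Icc a b)) (hff' : ∀ x ∈ Ioo a b, HasDerivAt f (f' x) x)
    (hL : 0 ≤ L) (hLf' : ∀ x ∈ Ioo a b, L ≤ f' x) (hf'U : ∀ x ∈ Ioo a b, f' x ≤ U) :
    L * (b - a) - 1 ≤ 2 * U * ∫ x in a..b, sin (f x) ^ 2 := by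
  rcases hab.eq_or_lt with rfl | hab
  · simp
  obtain ⟨c, hc, hfc⟩ := exists_hasDerivAt_eq_slope f f' hab hf hff'
  have hgap : L * (b - a) ≤ f b - f a := by
    rw [← le_div_iff₀ (sub_pos.2 hab), ← hfc]; exact hLf' c hc
  have hIoo : Ioo (min a b) (max a b) = Ioo a b := by rw [min_eq_left hab.le, max_eq_right hab.le]
  rw [← uIcc_of_le hab.le] at hf
  rw [← hIoo] at hff' hLf'
  have hf'_nonneg : ∀ x ∈ Ioo (min a b) (max a b), 0 ≤ f' x := fun x hx => hL.trans (hLf' x hx)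
  have hsubst : ∫ x in a..b, sin (f x) ^ 2 * f' x = ∫ u in f a..f b, sin u ^ 2 :=
    intervalIntegral.integral_comp_mul_deriv_of_deriv_nonneg (g := fun u => sin u ^ 2) hf hff'
      hf'_nonneg
  have hint : IntervalIntegrable (fun x => sin (f x) ^ 2 * f' x) volume a b :=
    (intervalIntegral.integrable_comp_mul_deriv_iff_of_deriv_nonneg (g := fun u => sin u ^ 2)
      hf hff' hf'_nonneg).2 ((continuous_sin.pow 2).intervalIntegrable _ _)
  have hmono : ∫ x in a..b, sin (f x) ^ 2 * f' x ≤ ∫ x in a..b, U * sin (f x) ^ 2 := by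
    refine intervalIntegral.integral_mono_on_of_le_Ioo hab.le hint ?_ fun x hx => ?_
    · exact (((continuous_sin.comp_continuousOn hf).pow 2).const_smul U).intervalIntegrable
    · rw [mul_comm U]; exact mul_le_mul_of_nonneg_left (hf'U x hx) (sq_nonneg _)
  rw [intervalIntegral.integral_const_mul] at hmono
  linarith [sub_sub_one_le_two_mul_integral_sin_sq (f a) (f b)]

-- Also true at `x = 0`, where the left side is `0` because `y / 0 = 0`.
lemma abs_sin_mul_div_le (t x : ℝ) : |sin (t * x) / x| ≤ |t| := by
  rcases eq_or_ne x 0 with rfl | hx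
  · simp
  rw [abs_div, div_le_iff₀ (abs_pos.2 hx), ← abs_mul]
  exact abs_sin_le_abs

section Symbol

variable (m θ : ℝ) {r : ℝ}

def symbol (r : ℝ) : ℝ := r ^ 2 + m ^ 2 * log (1 + r ^ (2 * θ))

def symbolDeriv (r : ℝ) : ℝ := 2 * r + m ^ 2 * (2 * θ * r ^ (2 * θ - 1) / (1 + r ^ (2 * θ)))

def freq (r : ℝ) : ℝ := √(symbol m θ r)

def freqDeriv (r : ℝ) : ℝ := symbolDeriv m θ r / (2 * freq m θ r)

lemma symbol_pos (hr : 0 < r) : 0 < symbol m θ r := by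
  have : 0 ≤ log (1 + r ^ (2 * θ)) := log_nonneg (by linarith [rpow_pos_of_pos hr (2 * θ)])
  unfold symbol; positivity

lemma freq_pos (hr : 0 < r) : 0 < freq m θ r := sqrt_pos.2 (symbol_pos m θ hr)

lemma freq_sq (hr : 0 < r) : freq m θ r ^ 2 = symbol m θ r := sq_sqrt (symbol_pos m θ hr).le

lemma hasDerivAt_symbol (hr : 0 < r) : HasDerivAt (symbol m θ) (symbolDeriv m θ r) r := by
  have hpos : 0 < 1 + r ^ (2 * θ) := by linarith [rpow_pos_of_pos hr (2 * θ)]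
  have h := (hasDerivAt_pow 2 r).add <| HasDerivAt.const_mul (m ^ 2) <|
    (((hasDerivAt_id r).rpow_const (p := 2 * θ) (Or.inl hr.ne')).const_add 1).log hpos.ne'
  refine h.congr_deriv ?_
  simp only [symbolDeriv, id]
  norm_num

lemma hasDerivAt_freq (hr : 0 < r) : HasDerivAt (freq m θ) (freqDeriv m θ r) r :=
  (hasDerivAt_symbol m θ hr).sqrt (symbol_pos m θ hr).ne'

variable {m θ}

lemma rpow_two_mul (hr : 0 < r) : r ^ (2 * θ) = (r ^ θ) ^ 2 := by
  rw [← rpow_natCast, ← rpow_mul hr.le]; ring_nf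

lemma symbol_le (hθ : θ ≤ 1) (hr0 : 0 < r) (hr1 : r ≤ 1) :
    symbol m θ r ≤ (1 + m ^ 2) * r ^ (2 * θ) := by
  have hsq : r ^ 2 ≤ r ^ (2 * θ) := by
    rw [← rpow_natCast]; exact rpow_le_rpow_of_exponent_ge hr0 hr1 (by push_cast; linarith)
  have hlog : log (1 + r ^ (2 * θ)) ≤ r ^ (2 * θ) := by
    have hpos : 0 < 1 + r ^ (2 * θ) := by linarith [rpow_pos_of_pos hr0 (2 * θ)]
    linarith [log_le_sub_one_of_pos hpos]
  unfold symbol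
  nlinarith [sq_nonneg m]

lemma le_symbol (hθ : 0 ≤ θ) (hr0 : 0 < r) (hr1 : r ≤ 1) :
    m ^ 2 / 2 * r ^ (2 * θ) ≤ symbol m θ r := by
  set x := r ^ (2 * θ)
  have hx0 : 0 ≤ x := (rpow_pos_of_pos hr0 _).le
  have hx1 : x ≤ 1 := rpow_le_one hr0.le hr1 (by linarith)
  have hlog : x / 2 ≤ log (1 + x) := by
    have h := one_sub_inv_le_log_of_pos (by linarith : 0 < 1 + x)
    have : x / 2 ≤ 1 - (1 + x)⁻¹ := by
      rw [show 1 - (1 + x)⁻¹ = x / (1 + x) by field_simp; ring]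
      exact div_le_div_of_nonneg_left hx0 (by linarith) (by linarith)
    linarith
  unfold symbol
  nlinarith [sq_nonneg m, sq_nonneg r]

lemma freq_le (hθ : θ ≤ 1) (hr0 : 0 < r) (hr1 : r ≤ 1) :
    freq m θ r ≤ √(1 + m ^ 2) * r ^ θ := by
  rw [freq, ← sqrt_sq (rpow_pos_of_pos hr0 θ).le, ← sqrt_mul (by positivity), ← rpow_two_mul hr0]
  exact sqrt_le_sqrt (symbol_le hθ hr0 hr1)

lemma le_freq (hθ : 0 ≤ θ) (hr0 : 0 < r) (hr1 : r ≤ 1) : m / 2 * r ^ θ ≤ freq m θ r := by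
  refine (le_abs_self _).trans (abs_le_sqrt ?_)
  have := le_symbol (m := m) hθ hr0 hr1
  rw [rpow_two_mul hr0] at this
  nlinarith [sq_nonneg m, sq_nonneg (r ^ θ)]

lemma le_symbolDeriv (hθ : 0 ≤ θ) (hr0 : 0 < r) (hr1 : r ≤ 1) :
    m ^ 2 * θ * r ^ (2 * θ - 1) ≤ symbolDeriv m θ r := by
  have hx1 : r ^ (2 * θ) ≤ 1 := rpow_le_one hr0.le hr1 (by linarith)
  have hy := rpow_pos_of_pos hr0 (2 * θ - 1)
  have : θ * r ^ (2 * θ - 1) ≤ 2 * θ * r ^ (2 * θ - 1) / (1 + r ^ (2 * θ)) := by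
    rw [le_div_iff₀ (by linarith [rpow_pos_of_pos hr0 (2 * θ)])]
    nlinarith [mul_nonneg hθ hy.le]
  unfold symbolDeriv
  nlinarith [sq_nonneg m, mul_le_mul_of_nonneg_left this (sq_nonneg m)]

lemma symbolDeriv_le (hθ0 : 0 ≤ θ) (hθ1 : θ ≤ 1) (hr0 : 0 < r) (hr1 : r ≤ 1) :
    symbolDeriv m θ r ≤ 2 * (1 + m ^ 2 * θ) * r ^ (2 * θ - 1) := by
  have hr : r ≤ r ^ (2 * θ - 1) := by
    simpa using rpow_le_rpow_of_exponent_ge hr0 hr1 (by linarith : 2 * θ - 1 ≤ 1)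
  have hy := rpow_pos_of_pos hr0 (2 * θ - 1)
  have : 2 * θ * r ^ (2 * θ - 1) / (1 + r ^ (2 * θ)) ≤ 2 * θ * r ^ (2 * θ - 1) :=
    div_le_self (by positivity) (by linarith [rpow_pos_of_pos hr0 (2 * θ)])
  unfold symbolDeriv
  nlinarith [sq_nonneg m, mul_le_mul_of_nonneg_left this (sq_nonneg m)]

lemma rpow_two_mul_sub_one (hr : 0 < r) : r ^ (2 * θ - 1) = r ^ (θ - 1) * r ^ θ := by
  rw [← rpow_add hr]; ring_nf

lemma le_freqDeriv (hθ0 : 0 ≤ θ) (hθ1 : θ ≤ 1) (hr0 : 0 < r) (hr1 : r ≤ 1) :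
    m ^ 2 * θ / (2 * √(1 + m ^ 2)) * r ^ (θ - 1) ≤ freqDeriv m θ r := by
  have hrθ := rpow_pos_of_pos hr0 θ
  calc m ^ 2 * θ / (2 * √(1 + m ^ 2)) * r ^ (θ - 1)
      = m ^ 2 * θ * r ^ (2 * θ - 1) / (2 * (√(1 + m ^ 2) * r ^ θ)) := by
        rw [rpow_two_mul_sub_one hr0]; field_simp
    _ ≤ freqDeriv m θ r :=
        div_le_div₀ ((by positivity : 0 ≤ m ^ 2 * θ * r ^ (2 * θ - 1)).trans
          (le_symbolDeriv hθ0 hr0 hr1)) (le_symbolDeriv hθ0 hr0 hr1)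
          (by linarith [freq_pos m θ hr0]) (by linarith [freq_le (m := m) hθ1 hr0 hr1])

lemma freqDeriv_le (hm : 0 < m) (hθ0 : 0 ≤ θ) (hθ1 : θ ≤ 1) (hr0 : 0 < r) (hr1 : r ≤ 1) :
    freqDeriv m θ r ≤ 2 * (1 + m ^ 2 * θ) / m * r ^ (θ - 1) := by
  have hrθ := rpow_pos_of_pos hr0 θ
  calc freqDeriv m θ r
      ≤ 2 * (1 + m ^ 2 * θ) * r ^ (2 * θ - 1) / (2 * (m / 2 * r ^ θ)) :=
        div_le_div₀ (by positivity) (symbolDeriv_le hθ0 hθ1 hr0 hr1) (by positivity)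
          (by linarith [le_freq (m := m) hθ0 hr0 hr1])
    _ = 2 * (1 + m ^ 2 * θ) / m * r ^ (θ - 1) := by
        rw [rpow_two_mul_sub_one hr0]; field_simp

end Symbol

section Phi

variable {m θ P₁ t r : ℝ}

lemma phi_eq_freq :
    phi m θ P₁ t r = P₁ * exp (-(r ^ 2) * t / 2) * sin (t * freq m θ r) / freq m θ r :=
  rfl

lemma exp_neg_sq_mul_div_two_sq (x : ℝ) : exp (-(r ^ 2) * x / 2) ^ 2 = exp (-x * r ^ 2) := by
  rw [← exp_nat_mul]; ring_nf

lemma phi_sq (hr : 0 < r) :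
    phi m θ P₁ t r ^ 2 = P₁ ^ 2 * exp (-t * r ^ 2) * sin (t * freq m θ r) ^ 2 / symbol m θ r := by
  rw [phi_eq_freq, div_pow, mul_pow, mul_pow, freq_sq m θ hr, exp_neg_sq_mul_div_two_sq]

lemma phi_sq_le : phi m θ P₁ t r ^ 2 ≤ P₁ ^ 2 * t ^ 2 * exp (-t * r ^ 2) := by
  rw [phi_eq_freq, mul_div_assoc, mul_pow, mul_pow, exp_neg_sq_mul_div_two_sq]
  calc _ ≤ P₁ ^ 2 * exp (-t * r ^ 2) * t ^ 2 :=
        mul_le_mul_of_nonneg_left (sq_le_sq.2 (abs_sin_mul_div_le t _)) (by positivity)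
    _ = _ := by ring

lemma integrableOn_pow_mul_phi_sq (k : ℕ) (ht : 0 < t) :
    IntegrableOn (fun r => r ^ k * phi m θ P₁ t r ^ 2) (Ioi 0) := by
  have hdom : IntegrableOn (fun r : ℝ => P₁ ^ 2 * t ^ 2 * (r ^ (k : ℝ) * exp (-t * r ^ 2)))
      (Ioi 0) :=
    (integrableOn_rpow_mul_exp_neg_mul_sq ht (by linarith [k.cast_nonneg (α := ℝ)])).const_mul _
  refine hdom.mono' (by unfold phi; fun_prop) <|
    (ae_restrict_iff' measurableSet_Ioi).2 (Filter.Eventually.of_forall fun r (hr : 0 < r) => ?_)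
  rw [norm_of_nonneg (by positivity), rpow_natCast]
  nlinarith [phi_sq_le (m := m) (θ := θ) (P₁ := P₁) (t := t) (r := r), pow_pos hr k]

lemma mul_sin_sq_le_pow_mul_phi_sq_of_mem_Icc (k : ℕ) {a : ℝ} (ha : 0 < a) (h2a : 2 * a ≤ 1)
    (hθ0 : 0 ≤ θ) (hθ1 : θ ≤ 1) (hr : r ∈ Icc a (2 * a)) :
    P₁ ^ 2 * exp (-4) * a ^ k / ((1 + m ^ 2) * (2 * a) ^ (2 * θ)) *
        sin ((a ^ 2)⁻¹ * freq m θ r) ^ 2 ≤ r ^ k * phi m θ P₁ (a ^ 2)⁻¹ r ^ 2 := by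
  have hr0 : 0 < r := ha.trans_le hr.1
  have hexp : exp (-4) ≤ exp (-(a ^ 2)⁻¹ * r ^ 2) := by
    rw [exp_le_exp, neg_mul, neg_le_neg_iff, inv_mul_le_iff₀ (by positivity)]
    nlinarith [hr.1, hr.2]
  have hsymb : symbol m θ r ≤ (1 + m ^ 2) * (2 * a) ^ (2 * θ) :=
    (symbol_le hθ1 hr0 (hr.2.trans h2a)).trans <| by gcongr; exact hr.2
  rw [phi_sq hr0]
  calc _ = P₁ ^ 2 * sin ((a ^ 2)⁻¹ * freq m θ r) ^ 2 * (exp (-4) * a ^ k) /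
        ((1 + m ^ 2) * (2 * a) ^ (2 * θ)) := by ring
    _ ≤ P₁ ^ 2 * sin ((a ^ 2)⁻¹ * freq m θ r) ^ 2 * (exp (-(a ^ 2)⁻¹ * r ^ 2) * r ^ k) /
        symbol m θ r := by
      gcongr
      exacts [symbol_pos m θ hr0, hr.1]
    _ = _ := by ring

end Phi

lemma exists_mul_le_integral_sin_sq_phase {m θ : ℝ} (hm : 0 < m) (hθ0 : 0 < θ) (hθ1 : θ ≤ 1) :
    ∃ κ a₀ : ℝ, 0 < κ ∧ 0 < a₀ ∧ ∀ a, 0 < a → a ≤ a₀ →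
      κ * a ≤ ∫ r in a..2 * a, sin ((a ^ 2)⁻¹ * freq m θ r) ^ 2 := by
  -- `c₁ r^(θ-1) ≤ freqDeriv m θ r ≤ c₂ r^(θ-1)` on `(0, 1]`, and `a ≤ c₁ / 2` makes the phase
  -- gain at least `2` across `[a, 2a]`.
  set c₁ := m ^ 2 * θ / (2 * √(1 + m ^ 2))
  set c₂ := 2 * (1 + m ^ 2 * θ) / m
  have hc₁ : 0 < c₁ := by positivity
  have hc₂ : 0 < c₂ := by positivity
  refine ⟨c₁ * 2 ^ (θ - 1) / (4 * c₂), min (1 / 2) (c₁ / 2), by positivity, by positivity,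
    fun a ha ha₀ => ?_⟩
  have h2a : 2 * a ≤ 1 := by linarith [min_le_left (1 / 2) (c₁ / 2)]
  have hac : a ≤ c₁ / 2 := ha₀.trans (min_le_right _ _)
  set t := (a ^ 2)⁻¹
  have ht : 0 < t := by positivity
  have hIcc : ∀ r ∈ Icc a (2 * a), 0 < r ∧ r ≤ 1 := fun r hr => ⟨ha.trans_le hr.1, hr.2.trans h2a⟩
  have hderiv : ∀ r ∈ Icc a (2 * a), HasDerivAt (fun r => t * freq m θ r)
      (t * freqDeriv m θ r) r :=
    fun r hr => (hasDerivAt_freq m θ (hIcc r hr).1).const_mul t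
  have key := mul_sub_sub_one_le_integral_sin_sq_comp (by linarith : a ≤ 2 * a)
    (fun r hr => (hderiv r hr).continuousAt.continuousWithinAt)
    (fun r hr => hderiv r (Ioo_subset_Icc_self hr)) (L := t * (c₁ * (2 * a) ^ (θ - 1)))
    (U := t * (c₂ * a ^ (θ - 1))) (by positivity)
    (fun r hr => by
      obtain ⟨hr0, hr1⟩ := hIcc r (Ioo_subset_Icc_self hr)
      have h : (2 * a) ^ (θ - 1) ≤ r ^ (θ - 1) :=
        rpow_le_rpow_of_nonpos hr0 hr.2.le (by linarith)
      exact mul_le_mul_of_nonneg_left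
        ((mul_le_mul_of_nonneg_left h hc₁.le).trans (le_freqDeriv hθ0.le hθ1 hr0 hr1)) ht.le)
    (fun r hr => by
      obtain ⟨hr0, hr1⟩ := hIcc r (Ioo_subset_Icc_self hr)
      have h : r ^ (θ - 1) ≤ a ^ (θ - 1) := rpow_le_rpow_of_nonpos ha hr.1.le (by linarith)
      exact mul_le_mul_of_nonneg_left
        ((freqDeriv_le hm hθ0.le hθ1 hr0 hr1).trans (mul_le_mul_of_nonneg_left h hc₂.le)) ht.le)
  have hLa : 2 ≤ t * (c₁ * (2 * a) ^ (θ - 1)) * a := by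
    have h1 : 1 ≤ (2 * a) ^ (θ - 1) :=
      one_le_rpow_of_pos_of_le_one_of_nonpos (by positivity) h2a (by linarith)
    have h2 : 2 ≤ t * c₁ * a := by
      rw [show t * c₁ * a = c₁ / a by simp only [t]; field_simp, le_div_iff₀ ha]; linarith
    nlinarith [mul_pos (mul_pos ht hc₁) ha]
  have hid : 4 * (t * (c₂ * a ^ (θ - 1))) * (c₁ * 2 ^ (θ - 1) / (4 * c₂) * a) =
      t * (c₁ * (2 * a) ^ (θ - 1)) * a := by
    rw [mul_rpow (by norm_num) ha.le]; field_simp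
  refine le_of_mul_le_mul_left (a := 4 * (t * (c₂ * a ^ (θ - 1)))) ?_ (by positivity)
  rw [show 2 * a - a = a by ring] at key
  linarith

lemma exists_mul_rpow_le_integral_pow_mul_phi_sq {n : ℕ} (hn : 1 ≤ n) {m θ : ℝ} (hm : 0 < m)
    (hθ0 : 0 < θ) (hθ1 : θ ≤ 1) :
    ∃ c a₀ : ℝ, 0 < c ∧ 0 < a₀ ∧ ∀ a, 0 < a → a ≤ a₀ → ∀ P₁ : ℝ,
      c * P₁ ^ 2 * a ^ ((n : ℝ) - 2 * θ) ≤
        ∫ r in Ioi 0, r ^ (n - 1) * phi m θ P₁ (a ^ 2)⁻¹ r ^ 2 := by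
  obtain ⟨κ, a₀, hκ, ha₀, hsin⟩ := exists_mul_le_integral_sin_sq_phase hm hθ0 hθ1
  refine ⟨κ * exp (-4) / ((1 + m ^ 2) * 2 ^ (2 * θ)), min a₀ (1 / 2), by positivity,
    by positivity, fun a ha haa₀ P₁ => ?_⟩
  have h2a : 2 * a ≤ 1 := by linarith [min_le_right a₀ (1 / 2)]
  have hsub : Icc a (2 * a) ⊆ Ioi 0 := fun r hr => ha.trans_le hr.1
  set K := P₁ ^ 2 * exp (-4) * a ^ (n - 1) / ((1 + m ^ 2) * (2 * a) ^ (2 * θ))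
  have hF := integrableOn_pow_mul_phi_sq (m := m) (θ := θ) (P₁ := P₁) (n - 1)
    (inv_pos.2 (pow_pos ha 2))
  have hsin_cont : ContinuousOn (fun r => sin ((a ^ 2)⁻¹ * freq m θ r) ^ 2) (Icc a (2 * a)) :=
    fun r hr => ((continuous_sin.continuousAt.comp (continuousAt_const.mul
      (hasDerivAt_freq m θ (hsub hr)).continuousAt)).pow 2).continuousWithinAt
  have hpow : a ^ ((n : ℝ) - 2 * θ) = a ^ (n - 1) * a / a ^ (2 * θ) := by
    rw [rpow_sub ha, rpow_natCast, pow_sub_one_mul (by omega)]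
  rw [← uIcc_of_le (by linarith : a ≤ 2 * a)] at hsub hsin_cont
  calc κ * exp (-4) / ((1 + m ^ 2) * 2 ^ (2 * θ)) * P₁ ^ 2 * a ^ ((n : ℝ) - 2 * θ)
      = K * (κ * a) := by
        rw [hpow]; simp only [K]; rw [mul_rpow (by norm_num) ha.le]; field_simp
    _ ≤ K * ∫ r in a..2 * a, sin ((a ^ 2)⁻¹ * freq m θ r) ^ 2 :=
        mul_le_mul_of_nonneg_left (hsin a ha (haa₀.trans (min_le_left _ _))) (by positivity)
    _ = ∫ r in a..2 * a, K * sin ((a ^ 2)⁻¹ * freq m θ r) ^ 2 :=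
        (intervalIntegral.integral_const_mul _ _).symm
    _ ≤ ∫ r in a..2 * a, r ^ (n - 1) * phi m θ P₁ (a ^ 2)⁻¹ r ^ 2 :=
        intervalIntegral.integral_mono_on (by linarith)
          (hsin_cont.const_smul K).intervalIntegrable (hF.mono_set hsub).intervalIntegrable
          fun r hr => mul_sin_sq_le_pow_mul_phi_sq_of_mem_Icc (n - 1) ha h2a hθ0.le hθ1 hr
    _ = ∫ r in Ioc a (2 * a), r ^ (n - 1) * phi m θ P₁ (a ^ 2)⁻¹ r ^ 2 :=
        intervalIntegral.integral_of_le (by linarith)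
    _ ≤ ∫ r in Ioi 0, r ^ (n - 1) * phi m θ P₁ (a ^ 2)⁻¹ r ^ 2 :=
        setIntegral_mono_set hF
          ((ae_restrict_iff' measurableSet_Ioi).2 (Filter.Eventually.of_forall
            fun r (hr : 0 < r) => by positivity))
          (Filter.Eventually.of_forall fun r hr => ha.trans hr.1)

end Profile

open Profile in
theorem stmt15_general (n : ℕ) (hn : 1 ≤ n) (m θ : ℝ) (hm : 0 < m) (hθ1 : 0 < θ) (hθ2 : θ ≤ 1) :
    ∃ C t₀ : ℝ, 0 < C ∧ 0 < t₀ ∧ ∀ t : ℝ, t₀ ≤ t → ∀ P₁ : ℝ,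
      C * P₁ ^ 2 * t ^ (-((n : ℝ) - 2 * θ) / 2) ≤
        ∫ ξ : E n, (phi m θ P₁ t ‖ξ‖) ^ 2 := by
  obtain ⟨c, a₀, hc, ha₀, hradial⟩ := exists_mul_rpow_le_integral_pow_mul_phi_sq hn hm hθ1 hθ2
  have : Nontrivial (E n) :=
    Module.nontrivial_of_finrank_pos (R := ℝ) (by rw [finrank_euclideanSpace_fin]; omega)
  set V := (volume : Measure (E n)).real (Metric.ball 0 1)
  have hV : 0 < V :=
    ENNReal.toReal_pos (Metric.measure_ball_pos volume _ one_pos).ne' measure_ball_lt_top.ne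
  refine ⟨n * V * c, (a₀ ^ 2)⁻¹, by positivity, by positivity, fun t ht P₁ => ?_⟩
  have ht0 : 0 < t := (by positivity : 0 < (a₀ ^ 2)⁻¹).trans_le ht
  have hat : (((√t)⁻¹) ^ 2)⁻¹ = t := by simp [sq_sqrt ht0.le]
  have haa₀ : (√t)⁻¹ ≤ a₀ :=
    inv_le_of_inv_le₀ ha₀ ((le_sqrt (by positivity) ht0.le).2 (by rwa [inv_pow]))
  have hpow : (√t)⁻¹ ^ ((n : ℝ) - 2 * θ) = t ^ (-((n : ℝ) - 2 * θ) / 2) := by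
    rw [sqrt_eq_rpow, ← rpow_neg_one, ← rpow_mul ht0.le, ← rpow_mul ht0.le]; ring_nf
  have hball := hradial (√t)⁻¹ (by positivity) haa₀ P₁
  rw [hat, hpow] at hball
  rw [integral_fun_norm_addHaar volume (fun r => phi m θ P₁ t r ^ 2), finrank_euclideanSpace_fin,
    nsmul_eq_mul, smul_eq_mul]
  simp only [smul_eq_mul]
  calc n * V * c * P₁ ^ 2 * t ^ (-((n : ℝ) - 2 * θ) / 2)
      = n * V * (c * P₁ ^ 2 * t ^ (-((n : ℝ) - 2 * θ) / 2)) := by ring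
    _ ≤ n * V * ∫ r in Ioi 0, r ^ (n - 1) * phi m θ P₁ t r ^ 2 := by gcongr
    _ = _ := by ring

/-- Lemma 6.3: lower bound for the `L²`-norm of the profile. -/
theorem stmt15 (n : ℕ) (hn : 1 ≤ n) (m θ : ℝ) (hm : 0 < m) (hθ1 : 0 < θ) (hθ2 : θ ≤ 1)
    (hnθ : 0 < (n : ℝ) - 2 * θ) :
    ∃ C t₀ : ℝ, 0 < C ∧ 0 < t₀ ∧ ∀ t : ℝ, t₀ ≤ t → ∀ P₁ : ℝ,
      C * P₁ ^ 2 * t ^ (-((n : ℝ) - 2 * θ) / 2) ≤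
        ∫ ξ : E n, (phi m θ P₁ t ‖ξ‖) ^ 2 :=
  stmt15_general n hn m θ hm hθ1 hθ2

end
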